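/- Let F : Γ₊ → ℝ be continuously differentiable, symmetric, concave and positively homogeneous of degree 1. Then for every κ ∈ Γ₊, writing F_i := ∂F/∂κ_i(κ), one has (∑_{j=1}^n κ_j)·(∑_{i=1}^n F_i·κ_i²) ≤ F(κ)·(∑_{j=1}^n κ_j²). (Equivalently, ∑_{i,j}(F_i κ_i² κ_j − F_i κ_i κ_j²) = ∑_{i<j} κ_i κ_j (κ_i − κ_j)(F_i − F_j) ≤ 0, using Euler's relation F(κ) = ∑_i F_i κ_i.) -/

import Mathlib

/-!
Concavity puts the graph of `F` below its tangent hyperplane at `κ`. Testing this against the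
transposed point `κ ∘ (i j)`, where `F` takes the same value by symmetry, gives
`(κᵢ - κⱼ)(Fᵢ - Fⱼ) ≤ 0`: the partial derivatives are ordered oppositely to the principal
curvatures. The weighted Chebyshev sum inequality with weights `κᵢ` then yields
`(∑ κⱼ)(∑ Fᵢ κᵢ²) ≤ (∑ κⱼ²)(∑ Fᵢ κᵢ)`, and the last factor is `F(κ)` by Euler's relation.
-/

noncomputable section

/-- The open positive cone `Γ₊ ⊆ ℝⁿ`. -/
def GammaPlus (n : ℕ) : Set (Fin n → ℝ) := {κ | ∀ i, 0 < κ i}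

open Finset

theorem isOpen_gammaPlus (n : ℕ) : IsOpen (GammaPlus n) := by
  have hpi : GammaPlus n = Set.univ.pi fun _ => Set.Ioi 0 := by ext; simp [GammaPlus]
  exact hpi ▸ isOpen_set_pi Set.finite_univ fun _ _ => isOpen_Ioi

theorem AntivaryOn.weighted_card_mul_sum_le_sum_mul_sum {ι α : Type*} [CommRing α]
    [LinearOrder α] [IsStrictOrderedRing α] {s : Finset ι} {w f g : ι → α}
    (hfg : AntivaryOn f g s) (hw : ∀ i ∈ s, 0 ≤ w i) :
    (∑ i ∈ s, w i) * ∑ i ∈ s, w i * f i * g i ≤ (∑ i ∈ s, w i * f i) * ∑ i ∈ s, w i * g i := by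
  set A : ι → ι → α := fun i j => w i * (w j * f j * g j) - w i * f i * (w j * g j)
  have hA : ∑ i ∈ s, ∑ j ∈ s, A i j =
      (∑ i ∈ s, w i) * (∑ i ∈ s, w i * f i * g i) - (∑ i ∈ s, w i * f i) * ∑ i ∈ s, w i * g i := by
    simp only [A, sum_sub_distrib, sum_mul_sum]
  have hA_comm : ∑ i ∈ s, ∑ j ∈ s, A j i = ∑ i ∈ s, ∑ j ∈ s, A i j := sum_comm
  have hA_symm : ∑ i ∈ s, ∑ j ∈ s, (A i j + A j i) =
      ∑ i ∈ s, ∑ j ∈ s, w i * w j * ((f j - f i) * (g j - g i)) :=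
    sum_congr rfl fun i _ => sum_congr rfl fun j _ => by ring
  have hnonpos : ∑ i ∈ s, ∑ j ∈ s, w i * w j * ((f j - f i) * (g j - g i)) ≤ 0 :=
    sum_nonpos fun i hi => sum_nonpos fun j hj =>
      mul_nonpos_of_nonneg_of_nonpos (mul_nonneg (hw i hi) (hw j hj))
        (hfg.sub_mul_sub_nonpos hi hj)
  simp only [sum_add_distrib, hA_comm] at hA_symm
  linarith

theorem ConcaveOn.le_add_of_hasFDerivAt {E : Type*} [NormedAddCommGroup E] [NormedSpace ℝ E]
    {s : Set E} {f : E → ℝ} {f' : E →L[ℝ] ℝ} {x y : E} (hf : ConcaveOn ℝ s f) (hx : x ∈ s)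
    (hy : y ∈ s) (hf' : HasFDerivAt f f' x) : f y ≤ f x + f' (y - x) := by
  set ℓ : ℝ →ᵃ[ℝ] E := AffineMap.lineMap x y
  have hderiv : HasDerivAt (f ∘ ℓ) (f' (y - x)) 0 :=
    hf'.comp_hasDerivAt_of_eq 0 AffineMap.hasDerivAt_lineMap (by simp [ℓ])
  have hslope := (hf.comp_affineMap ℓ).slope_le_of_hasDerivAt (x := 0) (y := 1)
    (by simpa [ℓ] using hx) (by simpa [ℓ] using hy) one_pos hderiv
  simp only [slope_def_field, Function.comp_apply, AffineMap.lineMap_apply_one,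
    AffineMap.lineMap_apply_zero, sub_zero, div_one, ℓ] at hslope
  linarith

theorem HasFDerivAt.apply_self_eq_of_homogeneous {E G : Type*} [NormedAddCommGroup E]
    [NormedSpace ℝ E] [NormedAddCommGroup G] [NormedSpace ℝ G] {f : E → G} {f' : E →L[ℝ] G}
    {x : E} (hf' : HasFDerivAt f f' x) (hhom : ∀ c : ℝ, 0 < c → f (c • x) = c • f x) :
    f' x = f x := by
  have hray : HasDerivAt (fun c : ℝ => f (c • x)) (f' x) 1 :=
    hf'.comp_hasDerivAt_of_eq 1 (by simpa using (hasDerivAt_id (1 : ℝ)).smul_const x)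
      (one_smul ℝ x).symm
  have hscale : HasDerivAt (fun c : ℝ => f (c • x)) (f x) 1 := by
    refine (by simpa using (hasDerivAt_id (1 : ℝ)).smul_const (f x) :
      HasDerivAt (fun c : ℝ => c • f x) (f x) 1).congr_of_eventuallyEq ?_
    filter_upwards [Ioi_mem_nhds one_pos] with c hc
    exact hhom c hc
  exact hray.unique hscale

theorem comp_swap_sub_self {ι : Type*} [DecidableEq ι] (κ : ι → ℝ) (i j : ι) :
    κ ∘ Equiv.swap i j - κ = (κ j - κ i) • (Pi.single i 1 - Pi.single j 1) := by
  ext k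
  rcases eq_or_ne k i with rfl | hki
  · rcases eq_or_ne k j with rfl | hkj <;> simp [*]
  · rcases eq_or_ne k j with rfl | hkj
    · simp [hki]
    · simp [Equiv.swap_apply_of_ne_of_ne hki hkj, hki, hkj]

/-- for a symmetric, concave, 1-homogeneous `C¹` curvature function `F`
on `Γ₊`, writing `F_i = ∂F/∂κ_i(κ)`, one has
`(∑ⱼ κⱼ)·(∑ᵢ Fᵢ κᵢ²) ≤ F(κ)·(∑ⱼ κⱼ²)`. -/
theorem concave_curvature_function_weighted_inequality (n : ℕ) (F : (Fin n → ℝ) → ℝ)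
    (hreg : ContDiffOn ℝ 1 F (GammaPlus n))
    (hsym : ∀ π : Equiv.Perm (Fin n), ∀ κ ∈ GammaPlus n, F (κ ∘ π) = F κ)
    (hconc : ConcaveOn ℝ (GammaPlus n) F)
    (hhom : ∀ κ ∈ GammaPlus n, ∀ c : ℝ, 0 < c → F (c • κ) = c * F κ) :
    ∀ κ ∈ GammaPlus n,
      (∑ j, κ j) * (∑ i, fderiv ℝ F κ (Pi.single i 1) * (κ i) ^ 2) ≤
        F κ * ∑ j, (κ j) ^ 2 := by
  intro κ hκ
  have hF : HasFDerivAt F (fderiv ℝ F κ) κ :=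
    ((hreg.differentiableOn one_ne_zero).differentiableAt
      ((isOpen_gammaPlus n).mem_nhds hκ)).hasFDerivAt
  set Fi : Fin n → ℝ := fun i => fderiv ℝ F κ (Pi.single i 1)
  have hanti : Antivary κ Fi := antivary_iff_forall_mul_nonpos.2 fun i j => by
    have htangent := hconc.le_add_of_hasFDerivAt hκ
      (show κ ∘ Equiv.swap i j ∈ GammaPlus n from fun k => hκ _) hF
    rw [hsym _ κ hκ, comp_swap_sub_self, map_smul, map_sub, smul_eq_mul] at htangent
    linarith
  have heuler : ∑ i, κ i * Fi i = F κ := by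
    rw [← hF.apply_self_eq_of_homogeneous fun c hc => by rw [hhom κ hκ c hc, smul_eq_mul]]
    conv_rhs => arg 2; rw [pi_eq_sum_univ' κ]
    simp only [map_sum, map_smul, smul_eq_mul, Fi]
  calc (∑ j, κ j) * ∑ i, Fi i * κ i ^ 2 = (∑ j, κ j) * ∑ i, κ i * κ i * Fi i := by
        simp only [sq, mul_comm]
    _ ≤ (∑ i, κ i * κ i) * ∑ i, κ i * Fi i :=
        (hanti.antivaryOn _).weighted_card_mul_sum_le_sum_mul_sum fun i _ => (hκ i).le
    _ = F κ * ∑ j, κ j ^ 2 := by simp only [heuler, sq, mul_comm]
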